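/- Let k be a positive semidefinite kernel on a set S, let x_1, …, x_t ∈ S and σ > 0, and define K_t, k_t(s), σ_t²(s) and the posterior mean μ_t as in the context. Suppose f : S → ℝ lies in the span of kernel sections with bounded kernel norm: f(x) = Σ_{j=1}^{m} α_j k(x, z_j) for some points z_1,…,z_m ∈ S and coefficients α ∈ ℝ^m with Σ_{i,j} α_i α_j k(z_i, z_j) ≤ B². If the observation vector is noiseless, y_i = f(x_i) for i = 1,…,t, then for every x ∈ S, | f(x) − μ_t(x) | ≤ B · √(σ_t²(x)). -/

import Mathlib

open Matrix

/-- A symmetric positive semidefinite kernel on a set `S`: symmetric, and every finite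
Gram matrix is positive semidefinite. -/
def IsPSDKernel {S : Type*} (k : S → S → ℝ) : Prop :=
  (∀ x y, k x y = k y x) ∧
    ∀ (n : ℕ) (x : Fin n → S), (Matrix.of fun i j => k (x i) (x j)).PosSemidef

/-- Regularized Gram matrix `K_t + σ² I`. -/
noncomputable def gramReg {S : Type*} (k : S → S → ℝ) (σ : ℝ) {t : ℕ}
    (x : Fin t → S) : Matrix (Fin t) (Fin t) ℝ :=
  (Matrix.of fun i j => k (x i) (x j)) + σ ^ 2 • (1 : Matrix (Fin t) (Fin t) ℝ)

/-- Kernel vector `k_t(s) = (k(s,x_1),…,k(s,x_t))ᵀ`. -/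
noncomputable def kvec {S : Type*} (k : S → S → ℝ) {t : ℕ} (x : Fin t → S) (s : S) :
    Fin t → ℝ :=
  fun i => k s (x i)

/-- GP posterior variance `σ_t²(s) = k(s,s) − k_t(s)ᵀ(K_t+σ²I)⁻¹k_t(s)`. -/
noncomputable def postVar {S : Type*} (k : S → S → ℝ) (σ : ℝ) {t : ℕ}
    (x : Fin t → S) (s : S) : ℝ :=
  k s s - kvec k x s ⬝ᵥ ((gramReg k σ x)⁻¹ *ᵥ kvec k x s)

/-- GP posterior mean `μ_t(s) = k_t(s)ᵀ(K_t+σ²I)⁻¹ y` for targets `y`. -/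
noncomputable def postMean {S : Type*} (k : S → S → ℝ) (σ : ℝ) {t : ℕ}
    (x : Fin t → S) (y : Fin t → ℝ) (s : S) : ℝ :=
  kvec k x s ⬝ᵥ ((gramReg k σ x)⁻¹ *ᵥ y)

/-!
Let `w = (K_t + σ² I)⁻¹ k_t(s)`. The posterior covariance
`h = k(·, s) − ∑ i, w i • k(·, x i)` is a finite combination of kernel sections, so the
reproducing property gives `⟪f, h⟫ = f s − ∑ i, w i * f (x i) = f s − μ_t(s)` and
`‖h‖² = h s − ∑ i, w i * h (x i)`. Since `(K_t + σ² I) w = k_t(s)`, `h (x i) = σ² w i`, hence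
`‖h‖² = σ_t²(s) − σ² ‖w‖² ≤ σ_t²(s)`, and Cauchy–Schwarz with `‖f‖ ≤ B` concludes.
-/

/-- The RKHS inner product of `∑ i, a i • k(·, u i)` and `∑ j, b j • k(·, v j)`. -/
def kernelForm {S ι κ : Type*} [Fintype ι] [Fintype κ] (k : S → S → ℝ) (u : ι → S) (v : κ → S)
    (a : ι → ℝ) (b : κ → ℝ) : ℝ :=
  ∑ i, ∑ j, a i * b j * k (u i) (v j)

section kernelForm

variable {S ι κ : Type*} [Fintype ι] [Fintype κ] {k : S → S → ℝ}

lemma kernelForm_comm (hk : ∀ x y, k x y = k y x) (u : ι → S) (v : κ → S) (a : ι → ℝ)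
    (b : κ → ℝ) : kernelForm k v u b a = kernelForm k u v a b := by
  unfold kernelForm
  rw [Finset.sum_comm]
  simp only [hk (v _), mul_comm (b _)]

lemma kernelForm_smul_left (u : ι → S) (v : κ → S) (c : ℝ) (a : ι → ℝ) (b : κ → ℝ) :
    kernelForm k u v (c • a) b = c * kernelForm k u v a b := by
  simp only [kernelForm, Finset.mul_sum, Pi.smul_apply, smul_eq_mul, mul_assoc]

lemma kernelForm_sumElim (u : ι → S) (v : κ → S) (a : ι → ℝ) (b : κ → ℝ) :
    kernelForm k (Sum.elim u v) (Sum.elim u v) (Sum.elim a b) (Sum.elim a b) =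
      kernelForm k u u a a + kernelForm k u v a b + kernelForm k v u b a +
        kernelForm k v v b b := by
  simp only [kernelForm, Fintype.sum_sum_type, Sum.elim_inl, Sum.elim_inr,
    Finset.sum_add_distrib]
  ring

lemma kernelForm_eq_sum_mul_apply (hk : ∀ x y, k x y = k y x) {g : S → ℝ} {u : ι → S}
    {a : ι → ℝ} (hg : ∀ p, g p = ∑ i, a i * k p (u i)) (v : κ → S) (b : κ → ℝ) :
    kernelForm k u v a b = ∑ j, b j * g (v j) := by
  simp only [kernelForm, hg, Finset.mul_sum]
  rw [Finset.sum_comm]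
  refine Finset.sum_congr rfl fun j _ => Finset.sum_congr rfl fun i _ => ?_
  rw [hk]
  ring

end kernelForm

namespace IsPSDKernel

variable {S : Type*} {k : S → S → ℝ}

lemma symm (hk : IsPSDKernel k) (x y : S) : k x y = k y x := hk.1 x y

lemma gram_posSemidef (hk : IsPSDKernel k) {ι : Type*} [Fintype ι] (u : ι → S) :
    (Matrix.of fun i j => k (u i) (u j)).PosSemidef := by
  let e := Fintype.equivFin ι
  convert (hk.2 _ (u ∘ e.symm)).submatrix e
  ext i j
  simp

lemma kernelForm_self_nonneg (hk : IsPSDKernel k) {ι : Type*} [Fintype ι] (u : ι → S)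
    (a : ι → ℝ) : 0 ≤ kernelForm k u u a a := by
  refine ((hk.gram_posSemidef u).dotProduct_mulVec_nonneg a).trans_eq ?_
  simp only [kernelForm, dotProduct, mulVec, of_apply, star_trivial, Finset.mul_sum]
  exact Finset.sum_congr rfl fun i _ => Finset.sum_congr rfl fun j _ => by ring

/-- The quadratic `c ↦ ‖c • g + h‖²` is nonnegative, so its discriminant is not positive. -/
lemma kernelForm_sq_le (hk : IsPSDKernel k) {ι κ : Type*} [Fintype ι] [Fintype κ]
    (u : ι → S) (v : κ → S) (a : ι → ℝ) (b : κ → ℝ) :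
    kernelForm k u v a b ^ 2 ≤ kernelForm k u u a a * kernelForm k v v b b := by
  have hquad : ∀ c : ℝ, 0 ≤ kernelForm k u u a a * (c * c) +
      2 * kernelForm k u v a b * c + kernelForm k v v b b := by
    intro c
    have := hk.kernelForm_self_nonneg (Sum.elim u v) (Sum.elim (c • a) b)
    rw [kernelForm_sumElim, kernelForm_comm hk.symm u v, kernelForm_smul_left,
      kernelForm_comm hk.symm u u, kernelForm_smul_left, kernelForm_smul_left] at this
    linarith
  have := discrim_le_zero hquad
  rw [discrim] at this
  nlinarith

end IsPSDKernel

lemma sum_vecCons_one_neg_mul {S : Type*} {t : ℕ} (g : S → ℝ) (s : S) (x : Fin t → S)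
    (w : Fin t → ℝ) :
    ∑ j, vecCons 1 (-w) j * g (vecCons s x j) = g s - ∑ i, w i * g (x i) := by
  simp [Fin.sum_univ_succ, sub_eq_add_neg]

section posterior

variable {S : Type*} {k : S → S → ℝ} {σ : ℝ} {t : ℕ} {x : Fin t → S}

noncomputable def postWeights (k : S → S → ℝ) (σ : ℝ) {t : ℕ} (x : Fin t → S) (s : S) :
    Fin t → ℝ :=
  (gramReg k σ x)⁻¹ *ᵥ kvec k x s

noncomputable def postCov (k : S → S → ℝ) (σ : ℝ) {t : ℕ} (x : Fin t → S) (p s : S) : ℝ :=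
  k p s - kvec k x p ⬝ᵥ postWeights k σ x s

lemma postVar_eq_postCov (s : S) : postVar k σ x s = postCov k σ x s s := rfl

lemma IsPSDKernel.gramReg_posDef (hk : IsPSDKernel k) (hσ : σ ≠ 0) :
    (gramReg k σ x).PosDef :=
  PosDef.posSemidef_add (hk.2 t x) (PosDef.one.smul (by positivity))

lemma IsPSDKernel.gramReg_transpose (hk : IsPSDKernel k) :
    (gramReg k σ x)ᵀ = gramReg k σ x := by
  ext i j
  simp [gramReg, hk.symm (x i), one_apply, eq_comm]

lemma IsPSDKernel.postMean_eq_postWeights_dotProduct (hk : IsPSDKernel k) (y : Fin t → ℝ)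
    (s : S) :
    postMean k σ x y s = postWeights k σ x s ⬝ᵥ y := by
  rw [postMean, dotProduct_mulVec, ← mulVec_transpose, transpose_nonsing_inv,
    hk.gramReg_transpose, dotProduct_comm, postWeights]
  exact dotProduct_comm _ _

lemma postCov_eq_sum_vecCons (p s : S) :
    postCov k σ x p s =
      ∑ j, vecCons 1 (-postWeights k σ x s) j * k p (vecCons s x j) := by
  rw [sum_vecCons_one_neg_mul, postCov, dotProduct]
  exact congrArg _ (Finset.sum_congr rfl fun i _ => mul_comm _ _)

lemma IsPSDKernel.postCov_obs_left (hk : IsPSDKernel k) (hσ : σ ≠ 0) (s : S) (i : Fin t) :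
    postCov k σ x (x i) s = σ ^ 2 * postWeights k σ x s i := by
  have hdet : IsUnit (gramReg k σ x).det :=
    (isUnit_iff_isUnit_det _).1 (hk.gramReg_posDef hσ).isUnit
  have hsolve : gramReg k σ x *ᵥ postWeights k σ x s = kvec k x s := by
    rw [postWeights, mulVec_mulVec, mul_nonsing_inv _ hdet, one_mulVec]
  have hi := congrFun hsolve i
  simp only [gramReg, add_mulVec, smul_mulVec, one_mulVec, Pi.add_apply, Pi.smul_apply,
    smul_eq_mul, kvec] at hi
  rw [postCov, hk.symm, ← hi]
  simp only [kvec, dotProduct, mulVec, of_apply]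
  ring

end posterior

/-- Noiseless GP posterior mean error bound: if `f` is a finite
combination of kernel sections with kernel norm at most `B` and the targets are
noiseless observations of `f`, then `|f(x) − μ_t(x)| ≤ B·√(σ_t²(x))`. -/
theorem stmt15 {S : Type*} (k : S → S → ℝ) (hk : IsPSDKernel k)
    (σ : ℝ) (hσ : 0 < σ) (t : ℕ) (x : Fin t → S)
    (f : S → ℝ) (m : ℕ) (z : Fin m → S) (α : Fin m → ℝ) (B : ℝ) (hB : 0 ≤ B)
    (hf : ∀ s : S, f s = ∑ j : Fin m, α j * k s (z j))
    (hnorm : ∑ i : Fin m, ∑ j : Fin m, α i * α j * k (z i) (z j) ≤ B ^ 2)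
    (y : Fin t → ℝ) (hy : ∀ i, y i = f (x i)) :
    ∀ s : S, |f s - postMean k σ x y s| ≤ B * Real.sqrt (postVar k σ x s) := by
  intro s
  set w := postWeights k σ x s
  set v : Fin (t + 1) → S := vecCons s x
  set b : Fin (t + 1) → ℝ := vecCons 1 (-w)
  have hinner : kernelForm k z v α b = f s - postMean k σ x y s := by
    rw [kernelForm_eq_sum_mul_apply hk.symm hf, sum_vecCons_one_neg_mul,
      hk.postMean_eq_postWeights_dotProduct, dotProduct]
    simp only [hy, w]
  have hcov_norm : kernelForm k v v b b ≤ postVar k σ x s := by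
    rw [kernelForm_eq_sum_mul_apply hk.symm (fun p => postCov_eq_sum_vecCons p s),
      sum_vecCons_one_neg_mul (fun p => postCov k σ x p s), postVar_eq_postCov]
    simp only [hk.postCov_obs_left hσ.ne']
    have : 0 ≤ ∑ i, w i * (σ ^ 2 * w i) :=
      Finset.sum_nonneg fun i _ => by nlinarith [sq_nonneg (σ * w i)]
    linarith
  have hsq : (f s - postMean k σ x y s) ^ 2 ≤ B ^ 2 * postVar k σ x s :=
    hinner ▸ (hk.kernelForm_sq_le z v α b).trans
      (mul_le_mul hnorm hcov_norm (hk.kernelForm_self_nonneg v b) (sq_nonneg B))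
  calc |f s - postMean k σ x y s| ≤ √(B ^ 2 * postVar k σ x s) := Real.abs_le_sqrt hsq
    _ = B * √(postVar k σ x s) := by rw [Real.sqrt_mul (sq_nonneg B), Real.sqrt_sq hB]
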